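/- arXiv:1401.4183 — 2 statements merged into one kernel-verified Lean document; each statement's English description precedes it below -/
import Mathlib

section
/- Let D, n ∈ ℕ with n sufficiently large and D ≥ n − 2⌊n/4⌋ − 1. Let G be a D-regular graph on n vertices, let A', B' partition V(G) with |A'|, |B'| ≥ D/2 and Δ(G[A',B']) ≤ D/2, and suppose G is critical. Then either D = (n−1)/2 and n ≡ 1 (mod 4), or D = n/2 − 1 and n ≡ 0 (mod 4). Moreover, if n ≡ 1 (mod 4) then |W| = 1, where W = {w : d_{G[A',B']}(w) ≥ 11D/40}. -/
open Finset

/-- The degree of `v` in the bipartite subgraph `G[A,B]` of `G` induced by the bipartition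
`A, B`: the number of neighbours of `v` on the opposite side. -/
def crossDeg {V : Type*} [DecidableEq V] (G : SimpleGraph V) [DecidableRel G.Adj]
    (A B : Finset V) (v : V) : ℕ :=
  if v ∈ A then (B.filter (G.Adj v)).card else (A.filter (G.Adj v)).card

/-- The number of edges of `G` with one endpoint in `A` and the other in `B`
(for disjoint `A` and `B`). -/
def crossCount {V : Type*} [DecidableEq V] (G : SimpleGraph V) [DecidableRel G.Adj]
    (A B : Finset V) : ℕ :=
  ((A ×ˢ B).filter fun p => G.Adj p.1 p.2).card

/-- `G` is critical (w.r.t. the partition `A, B` and the degree `D`):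
`Δ(G[A,B]) ≥ 11D/40`, and every subgraph `H` of `G[A,B]` with `Δ(H) ≤ 11D/40` satisfies
`e(H) ≤ 41D/40`. -/
def IsCritical {V : Type*} [DecidableEq V] (G : SimpleGraph V) [DecidableRel G.Adj]
    (A B : Finset V) (D : ℕ) : Prop :=
  (∃ v, 11 * D ≤ 40 * crossDeg G A B v) ∧
  ∀ H : SimpleGraph V, H ≤ G →
    (∀ u v, H.Adj u v → (u ∈ A ∧ v ∈ B) ∨ (u ∈ B ∧ v ∈ A)) →
    (∀ v, 40 * (H.neighborSet v).ncard ≤ 11 * D) →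
    40 * H.edgeSet.ncard ≤ 41 * D

set_option linter.unusedVariables false
set_option linter.unusedSectionVars false

section AuxStmt9

private lemma leaf (D t c s1 s2 p q m eF : ℤ)
    (hD : 400000 ≤ D) (ht1 : 40*t ≤ 11*D) (ht2 : 11*D ≤ 40*t+39) (hc1 : 2*c ≤ D)
    (hs1 : 0 ≤ s1) (hs1' : s1 ≤ 4) (hs2 : 0 ≤ s2) (hs2' : s2 ≤ 4)
    (hp : 0 ≤ p) (hp2 : p ≤ 2) (hps : p ≤ s1+s2)
    (hq1 : 1 ≤ q) (hq2 : q ≤ 12)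
    (hcoef : 18*s1 + 9*s2 + 2 ≤ 40*q)
    (hm1 : m ≤ D - q) (hm2 : D ≤ 2*m + 8)
    (hC2 : m*D ≤ m*(m-1) + eF + s1*(D-t+8) + s2*c)
    (hC4 : 40*(eF + p*(t-8) + (s1+s2-p)*(t-16)) ≤ 41*D) : False := by
  have e1 : 0 ≤ (D - q - m) * (m - q - 1) :=
    mul_nonneg (by linarith) (by linarith)
  have e2 : 0 ≤ p * (40*t + 39 - 11*D) := mul_nonneg hp (by linarith)
  have e3 : 0 ≤ (s1+s2-p) * (40*t + 39 - 11*D) := mul_nonneg (by linarith) (by linarith)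
  have e4 : 0 ≤ s1 * (40*t + 39 - 11*D) := mul_nonneg hs1 (by linarith)
  have e5 : 0 ≤ s2 * (D - 2*c) := mul_nonneg hs2 (by linarith)
  have e6 : 0 ≤ (40*q - 18*s1 - 9*s2 - 2) * (D - 400000) :=
    mul_nonneg (by linarith) (by linarith)
  nlinarith [e1, e2, e3, e4, e5, e6, hC2, hC4]

private lemma master (D t c a b n s1 s2 p eF : ℤ)
    (hD : 400000 ≤ D) (ht1 : 40*t ≤ 11*D) (ht2 : 11*D ≤ 40*t+39) (hc1 : 2*c ≤ D)
    (hab : a + b = n) (ha : D ≤ 2*a) (hb : D ≤ 2*b)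
    (hs1 : 0 ≤ s1) (hs1' : s1 ≤ 4) (hs2 : 0 ≤ s2) (hs2' : s2 ≤ 4)
    (hp1 : 1 ≤ p) (hp2 : p ≤ 2) (hps : p ≤ s1 + s2)
    (heF : 0 ≤ eF)
    (hC2 : (a-s1)*D ≤ (a-s1)*((a-s1)-1) + eF + s1*(D-t+8) + s2*c)
    (hC3 : (b-s2)*D ≤ (b-s2)*((b-s2)-1) + eF + s2*(D-t+8) + s1*c)
    (hC4 : 40*(eF + p*(t-8) + (s1+s2-p)*(t-16)) ≤ 41*D) :
    2*D + p ≤ n := by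
  by_contra hcon
  push_neg at hcon
  rcases le_or_gt 4 (s1+s2) with hs4 | hs4
  · -- many stars: immediate contradiction
    have e1 : 0 ≤ (s1+s2-4) * (t-16) := by
      apply mul_nonneg (by linarith) (by linarith)
    nlinarith [e1, heF]
  · -- s ≤ 3
    obtain ⟨qA, h1, h2, h3, h4, h5⟩ :
        ∃ qA : ℤ, 1 ≤ qA ∧ qA ≤ 2 ∧ 18*s1 + 9*s2 + 2 ≤ 40*qA ∧
          18*s2 + 9*s1 + 2 ≤ 40*(s1+s2+2-p-qA) ∧ 1 ≤ s1+s2+2-p-qA := by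
      by_cases h : 45 ≤ 18*s1 + 9*s2
      · have hcase : (s1 = 2 ∧ s2 = 1) ∨ (s1 = 3 ∧ s2 = 0) := by omega
        rcases hcase with ⟨hx, hy⟩ | ⟨hx, hy⟩ <;> subst hx <;> subst hy <;>
          exact ⟨2, by norm_num, by norm_num, by norm_num, by omega, by omega⟩
      · refine ⟨1, by norm_num, by norm_num, by omega, ?_, by omega⟩
        have hcase : s1 = 0 ∨ s1 = 1 ∨ s1 = 2 := by omega
        rcases hcase with hx | hx | hx <;> subst hx <;> omega
    rcases le_or_gt a (D + s1 - qA) with hA | hA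
    · exact leaf D t c s1 s2 p qA (a - s1) eF hD ht1 ht2 hc1 hs1 hs1' hs2 hs2'
        (by linarith) hp2 hps h1 (by linarith) h3 (by linarith) (by linarith) hC2 hC4
    · refine leaf D t c s2 s1 p (s1+s2+2-p-qA) (b - s2) eF hD ht1 ht2 hc1 hs2 hs2' hs1 hs1'
        (by linarith) hp2 (by linarith) h5 (by linarith) (by linarith)
        (by linarith) (by linarith) hC3 (by linarith)


section Helpers
variable {V : Type} [Fintype V] [DecidableEq V] (G : SimpleGraph V) [DecidableRel G.Adj]

private lemma double_count (S T : Finset V) (R : V → V → Prop) [∀ v w, Decidable (R v w)] :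
    ∑ v ∈ S, (T.filter (fun w => R v w)).card = ∑ w ∈ T, (S.filter (fun v => R v w)).card := by
  simp only [Finset.card_filter]
  exact Finset.sum_comm

private lemma adj_filter_comm (S T : Finset V) :
    ∑ v ∈ S, (T.filter (G.Adj v)).card = ∑ w ∈ T, (S.filter (G.Adj w)).card := by
  rw [double_count (R := fun v w => G.Adj v w)]
  refine Finset.sum_congr rfl fun w _ => ?_
  congr 1
  apply Finset.filter_congr
  intro v _
  simp [G.adj_comm]

/-- the number of `G`-neighbours of `v` in the pieces of a 3-part partition adds to the degree -/
private lemma deg_split3 {D : ℕ} (hreg : G.IsRegularOfDegree D) (P Q R : Finset V)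
    (hPQ : Disjoint P Q) (hPR : Disjoint P R) (hQR : Disjoint Q R)
    (hcover : P ∪ Q ∪ R = univ) (v : V) :
    (P.filter (G.Adj v)).card + (Q.filter (G.Adj v)).card + (R.filter (G.Adj v)).card = D := by
  have h1 : (univ.filter (G.Adj v)).card = D := by
    rw [← SimpleGraph.neighborFinset_eq_filter]
    exact hreg v
  rw [← hcover] at h1
  rw [Finset.filter_union, Finset.filter_union] at h1
  rw [Finset.card_union_of_disjoint, Finset.card_union_of_disjoint] at h1
  · exact h1
  · exact Finset.disjoint_filter_filter hPQ
  · rw [← Finset.filter_union]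
    exact Finset.disjoint_filter_filter (Finset.disjoint_union_left.mpr ⟨hPR, hQR⟩)

private lemma deg_split2 {D : ℕ} (hreg : G.IsRegularOfDegree D) (P Q : Finset V)
    (hPQ : Disjoint P Q) (hcover : P ∪ Q = univ) (v : V) :
    (P.filter (G.Adj v)).card + (Q.filter (G.Adj v)).card = D := by
  have := deg_split3 G hreg P Q ∅ hPQ (Finset.disjoint_empty_right _)
    (Finset.disjoint_empty_right _) (by rw [Finset.union_empty, hcover]) v
  simpa using this

end Helpers


section Helpers
variable {V : Type} [Fintype V] [DecidableEq V] (G : SimpleGraph V) [DecidableRel G.Adj]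

private def mkH (FA FB W : Finset V) (T : V → Finset V) : SimpleGraph V where
  Adj u v := G.Adj u v ∧ ((u ∈ FA ∧ v ∈ FB) ∨ (u ∈ W ∧ v ∈ T u) ∨
      (v ∈ FA ∧ u ∈ FB) ∨ (v ∈ W ∧ u ∈ T v))
  symm := by
    refine ⟨fun u v h => ?_⟩
    refine ⟨h.1.symm, ?_⟩
    tauto
  loopless := ⟨fun v h => G.loopless.irrefl v h.1⟩

private instance (FA FB W : Finset V) (T : V → Finset V) :
    DecidableRel (mkH G FA FB W T).Adj := fun u v => by
  unfold mkH
  exact inferInstanceAs (Decidable (_ ∧ _))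

private lemma mkH_le (FA FB W : Finset V) (T : V → Finset V) : mkH G FA FB W T ≤ G := by
  intro u v h
  exact h.1

private lemma ncard_neighborSet (H : SimpleGraph V) [DecidableRel H.Adj] (v : V) :
    (H.neighborSet v).ncard = (univ.filter (H.Adj v)).card := by
  rw [show H.neighborSet v = ↑(univ.filter (H.Adj v)) by ext u; simp]
  exact Set.ncard_coe_finset _

private lemma ncard_edgeSet (H : SimpleGraph V) [DecidableRel H.Adj] :
    H.edgeSet.ncard = H.edgeFinset.card := by
  rw [SimpleGraph.edgeFinset]
  exact Set.ncard_eq_toFinset_card' _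

end Helpers

section CB
variable {V : Type} [Fintype V] [DecidableEq V] (G : SimpleGraph V) [DecidableRel G.Adj]

private lemma crit_bound (D : ℕ) (A B : Finset V) (hdisj : Disjoint A B) (hcover : A ∪ B = univ)
    (hcrit2 : ∀ H : SimpleGraph V, H ≤ G →
      (∀ u v, H.Adj u v → (u ∈ A ∧ v ∈ B) ∨ (u ∈ B ∧ v ∈ A)) →
      (∀ v, 40 * (H.neighborSet v).ncard ≤ 11 * D) →
      40 * H.edgeSet.ncard ≤ 41 * D)
    (W FA FB : Finset V) (T : V → Finset V)
    (hFA : FA ⊆ A \ W) (hFB : FB ⊆ B \ W)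
    (hT : ∀ w ∈ W, T w ⊆ ((if w ∈ A then B else A).filter (G.Adj w)) \ W)
    (hdegW : ∀ w ∈ W, 40 * (T w).card ≤ 11 * D)
    (hdegV : ∀ v, v ∉ W →
      40 * (((if v ∈ A then FB else FA).filter (G.Adj v)).card + W.card) ≤ 11 * D) :
    40 * ((∑ v ∈ FA, (FB.filter (G.Adj v)).card) + ∑ w ∈ W, (T w).card) ≤ 41 * D := by
  classical
  set H : SimpleGraph V := mkH G FA FB W T with hHdef
  have hadj : ∀ u v, H.Adj u v ↔ (G.Adj u v ∧ ((u ∈ FA ∧ v ∈ FB) ∨ (u ∈ W ∧ v ∈ T u) ∨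
      (v ∈ FA ∧ u ∈ FB) ∨ (v ∈ W ∧ u ∈ T v))) := fun u v => Iff.rfl
  -- basic facts about T
  have hTfact : ∀ w ∈ W, ∀ u ∈ T w, G.Adj w u ∧ u ∉ W := by
    intro w hw u hu
    have h := hT w hw hu
    rw [Finset.mem_sdiff, Finset.mem_filter] at h
    exact ⟨h.1.2, h.2⟩
  have hABmem : ∀ v : V, v ∈ A ∨ v ∈ B := by
    intro v
    have : v ∈ A ∪ B := by rw [hcover]; exact mem_univ v
    simpa [Finset.mem_union] using this
  have hnotboth : ∀ v : V, v ∈ A → v ∈ B → False := by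
    intro v h1 h2
    exact Finset.disjoint_left.mp hdisj h1 h2
  -- neighbours of a W vertex
  have hnbrW : ∀ w ∈ W, univ.filter (H.Adj w) = T w := by
    intro w hw
    ext u
    simp only [Finset.mem_filter, Finset.mem_univ, true_and, hadj]
    constructor
    · rintro ⟨hgadj, (⟨h1, _⟩ | ⟨_, h2⟩ | ⟨_, h2⟩ | ⟨h1, h2⟩)⟩
      · exact absurd hw (Finset.mem_sdiff.mp (hFA h1)).2
      · exact h2
      · exact absurd hw (Finset.mem_sdiff.mp (hFB h2)).2
      · exact absurd hw (hTfact u h1 w h2).2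
    · intro hu
      exact ⟨(hTfact w hw u hu).1, Or.inr (Or.inl ⟨hw, hu⟩)⟩
  -- neighbours of a non-W vertex
  have hnbrV : ∀ v, v ∉ W → univ.filter (H.Adj v) ⊆
      ((if v ∈ A then FB else FA).filter (G.Adj v)) ∪ W.filter (fun w => v ∈ T w) := by
    intro v hv u hu
    rw [Finset.mem_filter] at hu
    obtain ⟨-, hgadj, hc⟩ := hu
    rcases hc with ⟨h1, h2⟩ | ⟨h1, _⟩ | ⟨h1, h2⟩ | ⟨h1, h2⟩
    · have hvA : v ∈ A := (Finset.mem_sdiff.mp (hFA h1)).1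
      rw [Finset.mem_union, if_pos hvA]
      exact Or.inl (Finset.mem_filter.mpr ⟨h2, hgadj⟩)
    · exact absurd h1 hv
    · have hvB : v ∈ B := (Finset.mem_sdiff.mp (hFB h2)).1
      have hvA : v ∉ A := fun h => hnotboth v h hvB
      rw [Finset.mem_union, if_neg hvA]
      exact Or.inl (Finset.mem_filter.mpr ⟨h1, hgadj⟩)
    · exact Finset.mem_union_right _ (Finset.mem_filter.mpr ⟨h1, h2⟩)
  -- H ≤ G, bipartite, degree bound
  have hle : H ≤ G := mkH_le G FA FB W T
  have hbip : ∀ u v, H.Adj u v → (u ∈ A ∧ v ∈ B) ∨ (u ∈ B ∧ v ∈ A) := by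
    intro u v huv
    rw [hadj] at huv
    obtain ⟨-, hc⟩ := huv
    rcases hc with ⟨h1, h2⟩ | ⟨h1, h2⟩ | ⟨h1, h2⟩ | ⟨h1, h2⟩
    · exact Or.inl ⟨(Finset.mem_sdiff.mp (hFA h1)).1, (Finset.mem_sdiff.mp (hFB h2)).1⟩
    · have h3 := (Finset.mem_sdiff.mp (hT u h1 h2)).1
      by_cases hu : u ∈ A
      · rw [if_pos hu] at h3
        exact Or.inl ⟨hu, (Finset.mem_filter.mp h3).1⟩
      · rw [if_neg hu] at h3
        exact Or.inr ⟨(hABmem u).resolve_left hu, (Finset.mem_filter.mp h3).1⟩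
    · exact Or.inr ⟨(Finset.mem_sdiff.mp (hFB h2)).1, (Finset.mem_sdiff.mp (hFA h1)).1⟩
    · have h3 := (Finset.mem_sdiff.mp (hT v h1 h2)).1
      by_cases hv : v ∈ A
      · rw [if_pos hv] at h3
        exact Or.inr ⟨(Finset.mem_filter.mp h3).1, hv⟩
      · rw [if_neg hv] at h3
        exact Or.inl ⟨(Finset.mem_filter.mp h3).1, (hABmem v).resolve_left hv⟩
  have hdeg : ∀ v, 40 * (H.neighborSet v).ncard ≤ 11 * D := by
    intro v
    rw [ncard_neighborSet]
    by_cases hv : v ∈ W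
    · rw [hnbrW v hv]
      exact hdegW v hv
    · calc 40 * (univ.filter (H.Adj v)).card
          ≤ 40 * (((if v ∈ A then FB else FA).filter (G.Adj v)) ∪
              W.filter (fun w => v ∈ T w)).card := by
            exact Nat.mul_le_mul_left _ (Finset.card_le_card (hnbrV v hv))
        _ ≤ 40 * (((if v ∈ A then FB else FA).filter (G.Adj v)).card + W.card) := by
            refine Nat.mul_le_mul_left _ ?_
            refine le_trans (Finset.card_union_le _ _) ?_
            exact Nat.add_le_add_left (Finset.card_le_card (Finset.filter_subset _ _)) _
        _ ≤ 11 * D := hdegV v hv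
  have hedge : 40 * H.edgeSet.ncard ≤ 41 * D := hcrit2 H hle hbip hdeg
  rw [ncard_edgeSet] at hedge
  -- now the lower bound on the number of edges via degree sum
  have hdegsum : ∑ v, H.degree v = 2 * H.edgeFinset.card :=
    SimpleGraph.sum_degrees_eq_twice_card_edges H
  have hdegfilter : ∀ v, H.degree v = (univ.filter (H.Adj v)).card := by
    intro v
    rw [← SimpleGraph.neighborFinset_eq_filter]
    rfl
  -- sum over W
  have hsumW : ∑ w ∈ W, H.degree w = ∑ w ∈ W, (T w).card := by
    refine Finset.sum_congr rfl fun w hw => ?_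
    rw [hdegfilter w, hnbrW w hw]
  -- sum over univ \ W
  have hlow : ∀ v ∈ univ \ W,
      (if v ∈ FA then (FB.filter (G.Adj v)).card else
        if v ∈ FB then (FA.filter (G.Adj v)).card else 0) +
        (W.filter (fun w => v ∈ T w)).card ≤ H.degree v := by
    intro v hv
    have hvW : v ∉ W := (Finset.mem_sdiff.mp hv).2
    rw [hdegfilter v]
    have hsub : (if v ∈ FA then FB.filter (G.Adj v) else
        if v ∈ FB then FA.filter (G.Adj v) else ∅) ∪ W.filter (fun w => v ∈ T w) ⊆
        univ.filter (H.Adj v) := by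
      intro u hu
      rw [Finset.mem_union] at hu
      rcases hu with hu | hu
      · split_ifs at hu with h1 h2
        · obtain ⟨huFB, hadjvu⟩ := Finset.mem_filter.mp hu
          exact Finset.mem_filter.mpr ⟨mem_univ u, hadjvu, Or.inl ⟨h1, huFB⟩⟩
        · obtain ⟨huFA, hadjvu⟩ := Finset.mem_filter.mp hu
          exact Finset.mem_filter.mpr ⟨mem_univ u, hadjvu, Or.inr (Or.inr (Or.inl ⟨huFA, h2⟩))⟩
        · exact absurd hu (Finset.notMem_empty u)
      · obtain ⟨huW, hvTu⟩ := Finset.mem_filter.mp hu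
        exact Finset.mem_filter.mpr ⟨mem_univ u, ((hTfact u huW v hvTu).1).symm,
          Or.inr (Or.inr (Or.inr ⟨huW, hvTu⟩))⟩
    have hdisj2 : Disjoint (if v ∈ FA then FB.filter (G.Adj v) else
        if v ∈ FB then FA.filter (G.Adj v) else ∅) (W.filter (fun w => v ∈ T w)) := by
      split_ifs with h1 h2
      · refine Finset.disjoint_left.mpr fun u hu1 hu2 => ?_
        exact (Finset.mem_sdiff.mp (hFB (Finset.mem_filter.mp hu1).1)).2
          (Finset.mem_of_mem_filter u hu2)
      · refine Finset.disjoint_left.mpr fun u hu1 hu2 => ?_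
        exact (Finset.mem_sdiff.mp (hFA (Finset.mem_filter.mp hu1).1)).2
          (Finset.mem_of_mem_filter u hu2)
      · simp
    calc (if v ∈ FA then (FB.filter (G.Adj v)).card else
          if v ∈ FB then (FA.filter (G.Adj v)).card else 0) +
          (W.filter (fun w => v ∈ T w)).card
        = ((if v ∈ FA then FB.filter (G.Adj v) else
          if v ∈ FB then FA.filter (G.Adj v) else ∅) ∪ W.filter (fun w => v ∈ T w)).card := by
          rw [Finset.card_union_of_disjoint hdisj2]
          congr 1
          split_ifs <;> simp
      _ ≤ (univ.filter (H.Adj v)).card := Finset.card_le_card hsub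
  have hsplit : ∑ v ∈ univ \ W, H.degree v + ∑ w ∈ W, H.degree w = ∑ v, H.degree v :=
    Finset.sum_sdiff (Finset.subset_univ W)
  have hsum_low : ∑ v ∈ univ \ W, ((if v ∈ FA then (FB.filter (G.Adj v)).card else
      if v ∈ FB then (FA.filter (G.Adj v)).card else 0) +
      (W.filter (fun w => v ∈ T w)).card) ≤ ∑ v ∈ univ \ W, H.degree v :=
    Finset.sum_le_sum hlow
  rw [Finset.sum_add_distrib] at hsum_low
  have hc2sum : ∑ v ∈ univ \ W, (W.filter (fun w => v ∈ T w)).card = ∑ w ∈ W, (T w).card := by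
    rw [double_count]
    refine Finset.sum_congr rfl fun w hw => ?_
    congr 1
    ext u
    simp only [Finset.mem_filter, Finset.mem_sdiff, Finset.mem_univ, true_and]
    exact ⟨fun h => h.2, fun h => ⟨(hTfact w hw u h).2, h⟩⟩
  have hFAsub : FA ∪ FB ⊆ univ \ W := by
    intro u hu
    rw [Finset.mem_union] at hu
    rcases hu with hu | hu
    · exact Finset.mem_sdiff.mpr ⟨mem_univ u, (Finset.mem_sdiff.mp (hFA hu)).2⟩
    · exact Finset.mem_sdiff.mpr ⟨mem_univ u, (Finset.mem_sdiff.mp (hFB hu)).2⟩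
  have hdisjF : Disjoint FA FB := by
    refine Finset.disjoint_left.mpr fun u hu1 hu2 => ?_
    exact hnotboth u (Finset.mem_sdiff.mp (hFA hu1)).1 (Finset.mem_sdiff.mp (hFB hu2)).1
  have hitesum : ∑ v ∈ univ \ W, (if v ∈ FA then (FB.filter (G.Adj v)).card else
      if v ∈ FB then (FA.filter (G.Adj v)).card else 0) =
      2 * ∑ v ∈ FA, (FB.filter (G.Adj v)).card := by
    rw [← Finset.sum_subset hFAsub (by
      intro x _ hx
      rw [Finset.mem_union] at hx
      push_neg at hx
      rw [if_neg hx.1, if_neg hx.2])]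
    rw [Finset.sum_union hdisjF]
    have h1 : ∑ v ∈ FA, (if v ∈ FA then (FB.filter (G.Adj v)).card else
        if v ∈ FB then (FA.filter (G.Adj v)).card else 0) =
        ∑ v ∈ FA, (FB.filter (G.Adj v)).card :=
      Finset.sum_congr rfl fun v hv => by rw [if_pos hv]
    have h2 : ∑ v ∈ FB, (if v ∈ FA then (FB.filter (G.Adj v)).card else
        if v ∈ FB then (FA.filter (G.Adj v)).card else 0) =
        ∑ v ∈ FA, (FB.filter (G.Adj v)).card := by
      rw [show ∑ v ∈ FB, (if v ∈ FA then (FB.filter (G.Adj v)).card else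
          if v ∈ FB then (FA.filter (G.Adj v)).card else 0) =
          ∑ v ∈ FB, (FA.filter (G.Adj v)).card from
        Finset.sum_congr rfl fun v hv => by
          rw [if_neg (fun h => Finset.disjoint_left.mp hdisjF h hv), if_pos hv]]
      exact adj_filter_comm G FB FA
    rw [h1, h2]
    ring
  rw [hitesum, hc2sum] at hsum_low
  rw [hsumW] at hsplit
  rw [hdegsum] at hsplit
  omega

end CB

section Main
variable {V : Type} [Fintype V] [DecidableEq V] (G : SimpleGraph V) [DecidableRel G.Adj]

private lemma count_bound (D lo hi : ℕ) (hreg : G.IsRegularOfDegree D)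
    (A B W : Finset V) (hdisj : Disjoint A B) (hcover : A ∪ B = univ)
    (hlo : ∀ w ∈ W, w ∈ A → lo ≤ (B.filter (G.Adj w)).card)
    (hhi : ∀ w ∈ W, w ∈ B → (A.filter (G.Adj w)).card ≤ hi) :
    (A \ W).card * D ≤ (A \ W).card * ((A \ W).card - 1) +
      (∑ v ∈ A \ W, ((B \ W).filter (G.Adj v)).card) +
      (W ∩ A).card * (D - lo) + (W ∩ B).card * hi := by
  classical
  have hnotboth : ∀ v : V, v ∈ A → v ∈ B → False := fun v h1 h2 =>
    Finset.disjoint_left.mp hdisj h1 h2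
  have hABmem : ∀ v : V, v ∈ A ∨ v ∈ B := by
    intro v
    have : v ∈ A ∪ B := by rw [hcover]; exact mem_univ v
    simpa [Finset.mem_union] using this
  -- three-way split of degrees
  have hsplit3 : ∀ v, ((A \ W).filter (G.Adj v)).card + ((B \ W).filter (G.Adj v)).card +
      (W.filter (G.Adj v)).card = D := by
    intro v
    refine deg_split3 G hreg _ _ _ ?_ ?_ ?_ ?_ v
    · exact Finset.disjoint_left.mpr fun u hu1 hu2 =>
        hnotboth u (Finset.mem_sdiff.mp hu1).1 (Finset.mem_sdiff.mp hu2).1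
    · exact Finset.disjoint_left.mpr fun u hu1 hu2 => (Finset.mem_sdiff.mp hu1).2 hu2
    · exact Finset.disjoint_left.mpr fun u hu1 hu2 => (Finset.mem_sdiff.mp hu1).2 hu2
    · ext u
      simp only [Finset.mem_union, Finset.mem_sdiff, Finset.mem_univ, iff_true]
      rcases hABmem u with h | h
      · by_cases hw : u ∈ W
        · tauto
        · tauto
      · by_cases hw : u ∈ W
        · tauto
        · tauto
  -- per-vertex bound on same-side neighbours
  have hsame : ∀ v ∈ A \ W, ((A \ W).filter (G.Adj v)).card ≤ (A \ W).card - 1 := by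
    intro v hv
    have hsub : (A \ W).filter (G.Adj v) ⊆ (A \ W).erase v := by
      intro u hu
      rw [Finset.mem_filter] at hu
      exact Finset.mem_erase.mpr ⟨(G.adj_symm hu.2).ne, hu.1⟩
    calc ((A \ W).filter (G.Adj v)).card ≤ ((A \ W).erase v).card := Finset.card_le_card hsub
      _ = (A \ W).card - 1 := Finset.card_erase_of_mem hv
  -- bound on edges into W
  have hWsum : ∑ v ∈ A \ W, (W.filter (G.Adj v)).card ≤
      (W ∩ A).card * (D - lo) + (W ∩ B).card * hi := by
    rw [adj_filter_comm]
    have hWsplit : W = (W ∩ A) ∪ (W ∩ B) := by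
      ext u
      simp only [Finset.mem_union, Finset.mem_inter]
      rcases hABmem u with h | h <;> tauto
    have hdisjW : Disjoint (W ∩ A) (W ∩ B) := by
      refine Finset.disjoint_left.mpr fun u hu1 hu2 => ?_
      exact hnotboth u (Finset.mem_inter.mp hu1).2 (Finset.mem_inter.mp hu2).2
    calc ∑ w ∈ W, ((A \ W).filter (G.Adj w)).card
        = ∑ w ∈ (W ∩ A) ∪ (W ∩ B), ((A \ W).filter (G.Adj w)).card := by rw [← hWsplit]
      _ = ∑ w ∈ W ∩ A, ((A \ W).filter (G.Adj w)).card +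
          ∑ w ∈ W ∩ B, ((A \ W).filter (G.Adj w)).card := Finset.sum_union hdisjW
      _ ≤ (W ∩ A).card * (D - lo) + (W ∩ B).card * hi := by
          refine add_le_add ?_ ?_
          · refine le_trans (Finset.sum_le_card_nsmul _ _ (D - lo) fun w hw => ?_)
              (by rw [smul_eq_mul])
            obtain ⟨hwW, hwA⟩ := Finset.mem_inter.mp hw
            have h2 : (A.filter (G.Adj w)).card + (B.filter (G.Adj w)).card = D :=
              deg_split2 G hreg A B hdisj hcover w
            have h3 : ((A \ W).filter (G.Adj w)).card ≤ (A.filter (G.Adj w)).card :=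
              Finset.card_le_card (Finset.filter_subset_filter _ (Finset.sdiff_subset))
            have := hlo w hwW hwA
            omega
          · refine le_trans (Finset.sum_le_card_nsmul _ _ hi fun w hw => ?_)
              (by rw [smul_eq_mul])
            obtain ⟨hwW, hwB⟩ := Finset.mem_inter.mp hw
            calc ((A \ W).filter (G.Adj w)).card ≤ (A.filter (G.Adj w)).card :=
                  Finset.card_le_card (Finset.filter_subset_filter _ (Finset.sdiff_subset))
              _ ≤ hi := hhi w hwW hwB
  -- put together
  calc (A \ W).card * D = ∑ v ∈ A \ W, D := by rw [Finset.sum_const, smul_eq_mul, mul_comm]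
    _ = ∑ v ∈ A \ W, (((A \ W).filter (G.Adj v)).card + ((B \ W).filter (G.Adj v)).card +
        (W.filter (G.Adj v)).card) := Finset.sum_congr rfl fun v _ => (hsplit3 v).symm
    _ ≤ ∑ v ∈ A \ W, (((A \ W).card - 1) + ((B \ W).filter (G.Adj v)).card +
        (W.filter (G.Adj v)).card) := by
        refine Finset.sum_le_sum fun v hv => ?_
        have := hsame v hv
        omega
    _ = (A \ W).card * ((A \ W).card - 1) + (∑ v ∈ A \ W, ((B \ W).filter (G.Adj v)).card) +
        ∑ v ∈ A \ W, (W.filter (G.Adj v)).card := by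
        rw [Finset.sum_add_distrib, Finset.sum_add_distrib, Finset.sum_const, smul_eq_mul,
          mul_comm]
    _ ≤ _ := by
        have := hWsum
        omega

end Main

section SB
variable {V : Type} [Fintype V] [DecidableEq V] (G : SimpleGraph V) [DecidableRel G.Adj]

private lemma side_bound (D t : ℕ) (hD : 400000 ≤ D)
    (ht1 : 40 * t ≤ 11 * D) (ht2 : 11 * D ≤ 40 * t + 39)
    (A B W : Finset V) (hdisj : Disjoint A B) (hcover : A ∪ B = univ)
    (hcrit2 : ∀ H : SimpleGraph V, H ≤ G →
      (∀ u v, H.Adj u v → (u ∈ A ∧ v ∈ B) ∨ (u ∈ B ∧ v ∈ A)) →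
      (∀ v, 40 * (H.neighborSet v).ncard ≤ 11 * D) →
      40 * H.edgeSet.ncard ≤ 41 * D)
    (hW : ∀ w ∈ W, w ∈ A → t ≤ (B.filter (G.Adj w)).card + 8) :
    (W ∩ A).card ≤ 4 := by
  classical
  by_contra hcon
  push_neg at hcon
  obtain ⟨S, hSsub, hScard⟩ := Finset.exists_subset_card_eq hcon
  have hSA : ∀ w ∈ S, w ∈ A := fun w hw => (Finset.mem_inter.mp (hSsub hw)).2
  have hSW : ∀ w ∈ S, w ∈ W := fun w hw => (Finset.mem_inter.mp (hSsub hw)).1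
  have ht16 : 16 ≤ t := by omega
  -- choose stars
  have hchoice : ∀ w : V, ∃ Tw : Finset V, w ∈ S →
      (Tw ⊆ (B.filter (G.Adj w)) ∧ Tw.card = t - 8) := by
    intro w
    by_cases hw : w ∈ S
    · have hcard : t - 8 ≤ (B.filter (G.Adj w)).card := by
        have := hW w (hSW w hw) (hSA w hw)
        omega
      obtain ⟨Tw, h1, h2⟩ := Finset.exists_subset_card_eq hcard
      exact ⟨Tw, fun _ => ⟨h1, h2⟩⟩
    · exact ⟨∅, fun h => absurd h hw⟩
  choose T hT using hchoice
  have key := crit_bound G D A B hdisj hcover hcrit2 S ∅ ∅ T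
    (Finset.empty_subset _) (Finset.empty_subset _)
    (by
      intro w hw
      rw [if_pos (hSA w hw)]
      intro u hu
      refine Finset.mem_sdiff.mpr ⟨(hT w hw).1 hu, fun huS => ?_⟩
      have huB : u ∈ B := Finset.mem_of_mem_filter u ((hT w hw).1 hu)
      exact Finset.disjoint_left.mp hdisj (hSA u huS) huB)
    (by
      intro w hw
      rw [(hT w hw).2]
      omega)
    (by
      intro v hv
      have : ((if v ∈ A then (∅ : Finset V) else ∅).filter (G.Adj v)).card = 0 := by
        split_ifs <;> simp
      rw [this, hScard]
      omega)
  rw [Finset.sum_empty] at key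
  have hsum : ∑ w ∈ S, (T w).card = 5 * (t - 8) := by
    rw [Finset.sum_congr rfl fun w hw => (hT w hw).2, Finset.sum_const, hScard, smul_eq_mul]
  rw [hsum] at key
  omega

end SB

section Final9
variable {V : Type} [Fintype V] [DecidableEq V]

/-- Lemma 4.1(ii): under the criticality hypotheses, either `D = (n−1)/2` and
`n ≡ 1 (mod 4)`, or `D = n/2 − 1` and `n ≡ 0 (mod 4)`; moreover, if `n ≡ 1 (mod 4)` then
`|W| = 1`, where `W = {w : d_{G[A',B']}(w) ≥ 11D/40}`. -/
theorem stmt9 : ∃ n₀ : ℕ, ∀ n D : ℕ, n₀ ≤ n → n - 2 * (n / 4) - 1 ≤ D →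
    ∀ (V : Type) (_ : Fintype V) (_ : DecidableEq V)
      (G : SimpleGraph V) (_ : DecidableRel G.Adj),
      Fintype.card V = n → G.IsRegularOfDegree D →
      ∀ A B : Finset V, Disjoint A B → A ∪ B = Finset.univ →
        D ≤ 2 * A.card → D ≤ 2 * B.card →
        (∀ v, 2 * crossDeg G A B v ≤ D) →
        IsCritical G A B D →
        ((2 * D = n - 1 ∧ n % 4 = 1) ∨ (2 * (D + 1) = n ∧ n % 4 = 0)) ∧
        (n % 4 = 1 →
          (Finset.univ.filter fun v => 11 * D ≤ 40 * crossDeg G A B v).card = 1) := by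
  refine ⟨1000000, ?_⟩
  intro n D hn hD V iV iDV G iG hcard hreg A B hdisj hcover hA hB hcd hcrit
  obtain ⟨hcrit1, hcrit2⟩ := hcrit
  have hD9 : 400000 ≤ D := by omega
  set t := 11 * D / 40 with ht
  have ht1 : 40 * t ≤ 11 * D := by omega
  have ht2 : 11 * D ≤ 40 * t + 39 := by omega
  have ht16 : 16 ≤ t := by omega
  have hnotboth : ∀ v : V, v ∈ A → v ∈ B → False := fun v h1 h2 =>
    Finset.disjoint_left.mp hdisj h1 h2
  have hABmem : ∀ v : V, v ∈ A ∨ v ∈ B := by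
    intro v
    have : v ∈ A ∪ B := by rw [hcover]; exact mem_univ v
    simpa [Finset.mem_union] using this
  have hcdA : ∀ v ∈ A, crossDeg G A B v = (B.filter (G.Adj v)).card := by
    intro v hv
    simp [crossDeg, hv]
  have hcdB : ∀ v ∈ B, crossDeg G A B v = (A.filter (G.Adj v)).card := by
    intro v hv
    have hvA : v ∉ A := fun h => hnotboth v h hv
    simp [crossDeg, hvA]
  set W : Finset V := univ.filter (fun v => t ≤ crossDeg G A B v + 8) with hW
  set Wst : Finset V := univ.filter (fun v => 11 * D ≤ 40 * crossDeg G A B v) with hWst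
  have hWstW : Wst ⊆ W := by
    intro v hv
    rw [hWst, Finset.mem_filter] at hv
    rw [hW, Finset.mem_filter]
    exact ⟨mem_univ v, by omega⟩
  have hcrit2B : ∀ H : SimpleGraph V, H ≤ G →
      (∀ u v, H.Adj u v → (u ∈ B ∧ v ∈ A) ∨ (u ∈ A ∧ v ∈ B)) →
      (∀ v, 40 * (H.neighborSet v).ncard ≤ 11 * D) →
      40 * H.edgeSet.ncard ≤ 41 * D :=
    fun H hle hbip hdeg => hcrit2 H hle (fun u v h => (hbip u v h).symm) hdeg
  have hs1 : (W ∩ A).card ≤ 4 := by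
    refine side_bound G D t hD9 ht1 ht2 A B W hdisj hcover hcrit2 ?_
    intro w hw hwA
    rw [hW, Finset.mem_filter] at hw
    rw [← hcdA w hwA]
    omega
  have hs2 : (W ∩ B).card ≤ 4 := by
    refine side_bound G D t hD9 ht1 ht2 B A W hdisj.symm (by rwa [Finset.union_comm]) hcrit2B ?_
    intro w hw hwB
    rw [hW, Finset.mem_filter] at hw
    rw [← hcdB w hwB]
    omega
  have hWsplit : W = (W ∩ A) ∪ (W ∩ B) := by
    ext u
    simp only [Finset.mem_union, Finset.mem_inter]
    rcases hABmem u with h | h <;> tauto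
  have hdisjW : Disjoint (W ∩ A) (W ∩ B) := by
    refine Finset.disjoint_left.mpr fun u hu1 hu2 => ?_
    exact hnotboth u (Finset.mem_inter.mp hu1).2 (Finset.mem_inter.mp hu2).2
  have hWcard : W.card = (W ∩ A).card + (W ∩ B).card := by
    conv_lhs => rw [hWsplit]
    exact Finset.card_union_of_disjoint hdisjW
  have hr1 : 1 ≤ Wst.card := by
    obtain ⟨v, hv⟩ := hcrit1
    exact Finset.card_pos.mpr ⟨v, by rw [hWst, Finset.mem_filter]; exact ⟨mem_univ v, hv⟩⟩
  -- the key step, for p = 1 or 2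
  have hkey : ∀ p : ℕ, 1 ≤ p → p ≤ 2 → p ≤ Wst.card → 2 * D + p ≤ n := by
    intro p hp1 hp2 hpr
    obtain ⟨P, hPsub, hPcard⟩ := Finset.exists_subset_card_eq hpr
    have hPW : P ⊆ W := fun x hx => hWstW (hPsub hx)
    have hps : p ≤ W.card := hPcard ▸ Finset.card_le_card hPW
    -- choose the stars
    have hchoice : ∀ w : V, ∃ Tw : Finset V, w ∈ W →
        (Tw ⊆ ((if w ∈ A then B else A).filter (G.Adj w)) \ W ∧
         Tw.card = (if w ∈ P then t - 8 else t - 16)) := by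
      intro w
      by_cases hw : w ∈ W
      · have hcdw : t ≤ crossDeg G A B w + 8 := by
          rw [hW, Finset.mem_filter] at hw
          exact hw.2
        set S0 := (if w ∈ A then B else A).filter (G.Adj w) with hS0
        have hopp : crossDeg G A B w = S0.card := by
          rw [hS0]
          by_cases hwA : w ∈ A
          · rw [if_pos hwA, hcdA w hwA]
          · rw [if_neg hwA]
            simp [crossDeg, hwA]
        have hsdcard := Finset.le_card_sdiff W S0
        have hWc8 : W.card ≤ 8 := by omega
        have hsd : (if w ∈ P then t - 8 else t - 16) ≤ (S0 \ W).card := by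
          split_ifs with hwP
          · have hst : 11 * D ≤ 40 * crossDeg G A B w := by
              have := hPsub hwP
              rw [hWst, Finset.mem_filter] at this
              exact this.2
            omega
          · omega
        obtain ⟨Tw, h1, h2⟩ := Finset.exists_subset_card_eq hsd
        exact ⟨Tw, fun _ => ⟨h1, h2⟩⟩
      · exact ⟨∅, fun h => absurd h hw⟩
    choose T hT using hchoice
    -- criticality gives C4
    have hC4 := crit_bound G D A B hdisj hcover hcrit2 W (A \ W) (B \ W) T
      (Finset.Subset.refl _) (Finset.Subset.refl _)
      (fun w hw => (hT w hw).1)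
      (by
        intro w hw
        rw [(hT w hw).2]
        split_ifs <;> omega)
      (by
        intro v hv
        have hcdv : crossDeg G A B v + 9 ≤ t := by
          rw [hW, Finset.mem_filter] at hv
          simp only [mem_univ, true_and] at hv
          omega
        have hle1 : ((if v ∈ A then B \ W else A \ W).filter (G.Adj v)).card ≤
            crossDeg G A B v := by
          by_cases hvA : v ∈ A
          · rw [if_pos hvA, hcdA v hvA]
            exact Finset.card_le_card (Finset.filter_subset_filter _ Finset.sdiff_subset)
          · rw [if_neg hvA, hcdB v ((hABmem v).resolve_left hvA)]
            exact Finset.card_le_card (Finset.filter_subset_filter _ Finset.sdiff_subset)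
        have hifeq : (if v ∈ A then B \ W else A \ W) = (if v ∈ A then (B \ W) else (A \ W)) := rfl
        have hWc : W.card ≤ 8 := by omega
        calc 40 * (((if v ∈ A then B \ W else A \ W).filter (G.Adj v)).card + W.card)
            ≤ 40 * ((t - 9) + 8) := by
              refine Nat.mul_le_mul_left _ ?_
              omega
          _ ≤ 11 * D := by omega)
    -- compute the star sum
    have hsumT : ∑ w ∈ W, (T w).card = p * (t - 8) + (W.card - p) * (t - 16) := by
      have h0 : ∑ w ∈ W, (T w).card = ∑ w ∈ W, (if w ∈ P then t - 8 else t - 16) :=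
        Finset.sum_congr rfl fun w hw => (hT w hw).2
      have h1 : ∑ w ∈ W \ P, (if w ∈ P then t - 8 else t - 16) +
          ∑ w ∈ P, (if w ∈ P then t - 8 else t - 16) =
          ∑ w ∈ W, (if w ∈ P then t - 8 else t - 16) := Finset.sum_sdiff hPW
      have h2 : ∑ w ∈ P, (if w ∈ P then t - 8 else t - 16) = p * (t - 8) := by
        rw [Finset.sum_congr rfl fun w hw => if_pos hw, Finset.sum_const, smul_eq_mul, hPcard]
      have h3 : ∑ w ∈ W \ P, (if w ∈ P then t - 8 else t - 16) = (W.card - p) * (t - 16) := by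
        rw [Finset.sum_congr rfl fun w hw => if_neg (Finset.mem_sdiff.mp hw).2,
          Finset.sum_const, smul_eq_mul, Finset.card_sdiff_of_subset hPW, hPcard]
      omega
    -- counting bounds on both sides
    have hC2n := count_bound G D (t - 8) (D / 2) hreg A B W hdisj hcover
      (by
        intro w hw hwA
        rw [hW, Finset.mem_filter] at hw
        rw [← hcdA w hwA]
        omega)
      (by
        intro w hw hwB
        rw [← hcdB w hwB]
        have := hcd w
        omega)
    have hC3n := count_bound G D (t - 8) (D / 2) hreg B A W hdisj.symm
      (by rwa [Finset.union_comm])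
      (by
        intro w hw hwB
        rw [hW, Finset.mem_filter] at hw
        rw [← hcdB w hwB]
        omega)
      (by
        intro w hw hwA
        rw [← hcdA w hwA]
        have := hcd w
        omega)
    have hBsum : ∑ v ∈ B \ W, ((A \ W).filter (G.Adj v)).card =
        ∑ v ∈ A \ W, ((B \ W).filter (G.Adj v)).card :=
      (adj_filter_comm G (A \ W) (B \ W)).symm
    rw [hBsum] at hC3n
    rw [hsumT] at hC4
    -- cardinality identities
    have haW : (A \ W).card + (W ∩ A).card = A.card := by
      rw [Finset.inter_comm]
      exact Finset.card_sdiff_add_card_inter A W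
    have hbW : (B \ W).card + (W ∩ B).card = B.card := by
      rw [Finset.inter_comm]
      exact Finset.card_sdiff_add_card_inter B W
    have habn : A.card + B.card = n := by
      have h := Finset.card_union_of_disjoint hdisj
      rw [hcover, Finset.card_univ, hcard] at h
      omega
    have ht8D : t - 8 ≤ D := by omega
    have h8t : 8 ≤ t := by omega
    have h16t : 16 ≤ t := by omega
    have ha1 : 1 ≤ (A \ W).card := by omega
    have hb1 : 1 ≤ (B \ W).card := by omega
    -- move everything to ℤ
    zify [ht8D, h8t, h16t, ha1] at hC2n
    zify [ht8D, h8t, h16t, hb1] at hC3n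
    zify [h8t, h16t, hps] at hC4
    have haWz : ((A \ W).card : ℤ) = (A.card : ℤ) - ((W ∩ A).card : ℤ) := by omega
    have hbWz : ((B \ W).card : ℤ) = (B.card : ℤ) - ((W ∩ B).card : ℤ) := by omega
    rw [haWz] at hC2n
    rw [hbWz] at hC3n
    have hkeyz := master (D : ℤ) (t : ℤ) ((D / 2 : ℕ) : ℤ) (A.card : ℤ) (B.card : ℤ) (n : ℤ)
      ((W ∩ A).card : ℤ) ((W ∩ B).card : ℤ) (p : ℤ)
      ((∑ v ∈ A \ W, ((B \ W).filter (G.Adj v)).card : ℕ) : ℤ)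
      (by exact_mod_cast hD9) (by exact_mod_cast ht1) (by exact_mod_cast ht2)
      (by
        have : 2 * (D / 2) ≤ D := by omega
        exact_mod_cast this)
      (by exact_mod_cast habn) (by exact_mod_cast hA) (by exact_mod_cast hB)
      (by exact Int.natCast_nonneg _) (by exact_mod_cast hs1) (by exact Int.natCast_nonneg _) (by exact_mod_cast hs2)
      (by exact_mod_cast hp1) (by exact_mod_cast hp2)
      (by
        have : p ≤ (W ∩ A).card + (W ∩ B).card := by omega
        exact_mod_cast this)
      (by exact Int.natCast_nonneg _)
      (by push_cast; linarith [hC2n]) (by push_cast; linarith [hC3n])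
      (by
        have hWz : ((W.card : ℤ)) = ((W ∩ A).card : ℤ) + ((W ∩ B).card : ℤ) := by
          exact_mod_cast hWcard
        rw [hWz] at hC4
        push_cast
        linarith [hC4])
    exact_mod_cast hkeyz
  by_cases h2 : 2 ≤ Wst.card
  · have hk2 := hkey 2 (by norm_num) (le_refl 2) h2
    constructor
    · omega
    · intro h4
      omega
  · have hk1 := hkey 1 (le_refl 1) (by norm_num) hr1
    constructor
    · omega
    · intro h4
      omega


end Final9
end AuxStmt9
end

section
/- Let n = 4k+1 for k ∈ ℕ and D = (n−1)/2. Construct the graph G_crit as follows: take two disjoint cliques with vertex sets A and B, each of size (n−1)/2; add a vertex a adjacent to exactly half of the vertices of A and exactly half of the vertices of B; and add a perfect matching M between the vertices of A not adjacent to a and the vertices of B not adjacent to a. Then G_crit is D-regular and, setting A' = A ∪ {a} and B' = B, we have e_{G_crit}(A', B') = D. -/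
open Finset

/-- The example `G_crit`: take `n = 4k+1`, `D = (n−1)/2 = 2k`, two disjoint cliques on
vertex sets `A` and `B` of size `2k`, a vertex `a` adjacent to exactly half of `A` (the set
`Na`) and half of `B` (the set `Nb`), and a perfect matching `f` between `A \ Na` and
`B \ Nb`. Then `G_crit` is `D`-regular and, with `A' = A ∪ {a}`, `B' = B`, we have
`e(A',B') = D`. -/
theorem stmt10 (k : ℕ) (hk : 1 ≤ k) (V : Type*) [Fintype V] [DecidableEq V]
    (hcard : Fintype.card V = 4 * k + 1)
    (G : SimpleGraph V) [DecidableRel G.Adj]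
    (A B : Finset V) (a : V) (Na Nb : Finset V) (f : V → V)
    (haA : a ∉ A) (haB : a ∉ B) (hABdisj : Disjoint A B)
    (hpart : insert a (A ∪ B) = Finset.univ)
    (hAcard : A.card = 2 * k) (hBcard : B.card = 2 * k)
    (hNaA : Na ⊆ A) (hNbB : Nb ⊆ B) (hNacard : Na.card = k) (hNbcard : Nb.card = k)
    (hcliqueA : ∀ u ∈ A, ∀ v ∈ A, (G.Adj u v ↔ u ≠ v))
    (hcliqueB : ∀ u ∈ B, ∀ v ∈ B, (G.Adj u v ↔ u ≠ v))
    (hadja : ∀ v, G.Adj a v ↔ v ∈ Na ∪ Nb)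
    (hbij : Set.BijOn f ↑(A \ Na) ↑(B \ Nb))
    (hmatch : ∀ u ∈ A, ∀ v ∈ B, (G.Adj u v ↔ u ∈ A \ Na ∧ v ∈ B \ Nb ∧ f u = v)) :
    G.IsRegularOfDegree (2 * k) ∧ crossCount G (insert a A) B = 2 * k := by
  have hcases : ∀ w : V, w = a ∨ w ∈ A ∨ w ∈ B := by
    intro w
    have := mem_univ w
    rw [← hpart] at this
    simpa [mem_insert, mem_union] using this
  have hNaNb : Disjoint Na Nb := hABdisj.mono hNaA hNbB
  have hAB : ∀ w, w ∈ A → w ∈ B → False := fun w hA hB =>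
    (Finset.disjoint_left.mp hABdisj) hA hB
  constructor
  · intro v
    rw [SimpleGraph.degree]
    rcases hcases v with rfl | hvA | hvB
    · have hnb : G.neighborFinset v = Na ∪ Nb := by
        ext w; simp [SimpleGraph.mem_neighborFinset, hadja]
      rw [hnb, card_union_of_disjoint hNaNb, hNacard, hNbcard]; ring
    · by_cases hvNa : v ∈ Na
      · have hnb : G.neighborFinset v = insert a (A.erase v) := by
          ext w
          simp only [SimpleGraph.mem_neighborFinset, mem_insert, mem_erase]
          constructor
          · intro hadj
            rcases hcases w with rfl | hwA | hwB
            · exact Or.inl rfl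
            · exact Or.inr ⟨Ne.symm ((hcliqueA v hvA w hwA).mp hadj), hwA⟩
            · exact absurd ((hmatch v hvA w hwB).mp hadj).1
                (by simp [mem_sdiff, hvNa])
          · rintro (rfl | ⟨hne, hwA⟩)
            · exact ((hadja v).mpr (mem_union_left _ hvNa)).symm
            · exact (hcliqueA v hvA w hwA).mpr (Ne.symm hne)
        rw [hnb, card_insert_of_notMem (fun h => haA (mem_of_mem_erase h)),
          card_erase_of_mem hvA, hAcard]
        omega
      · have hvmem : v ∈ A \ Na := mem_sdiff.mpr ⟨hvA, hvNa⟩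
        have hfv : f v ∈ B \ Nb := by
          have := hbij.mapsTo (by simpa using hvmem)
          simpa using this
        have hfvB : f v ∈ B := (mem_sdiff.mp hfv).1
        have hnb : G.neighborFinset v = insert (f v) (A.erase v) := by
          ext w
          simp only [SimpleGraph.mem_neighborFinset, mem_insert, mem_erase]
          constructor
          · intro hadj
            rcases hcases w with rfl | hwA | hwB
            · have := (hadja v).mpr (by simpa [hadja] using hadj.symm)
              rcases mem_union.mp (by simpa [hadja] using hadj.symm) with h | h
              · exact absurd h hvNa
              · exact absurd (hNbB h) (fun hB => hAB v hvA hB)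
            · exact Or.inr ⟨((hcliqueA v hvA w hwA).mp hadj).symm, hwA⟩
            · exact Or.inl ((hmatch v hvA w hwB).mp hadj).2.2.symm
          · rintro (rfl | ⟨hne, hwA⟩)
            · exact (hmatch v hvA (f v) hfvB).mpr ⟨hvmem, hfv, rfl⟩
            · exact (hcliqueA v hvA w hwA).mpr (Ne.symm hne)
        rw [hnb, card_insert_of_notMem
            (fun h => hAB (f v) (mem_of_mem_erase h) hfvB),
          card_erase_of_mem hvA, hAcard]
        omega
    · by_cases hvNb : v ∈ Nb
      · have hnb : G.neighborFinset v = insert a (B.erase v) := by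
          ext w
          simp only [SimpleGraph.mem_neighborFinset, mem_insert, mem_erase]
          constructor
          · intro hadj
            rcases hcases w with rfl | hwA | hwB
            · exact Or.inl rfl
            · exact absurd ((hmatch w hwA v hvB).mp hadj.symm).2.1
                (by simp [mem_sdiff, hvNb])
            · exact Or.inr ⟨((hcliqueB v hvB w hwB).mp hadj).symm, hwB⟩
          · rintro (rfl | ⟨hne, hwB⟩)
            · exact ((hadja v).mpr (mem_union_right _ hvNb)).symm
            · exact (hcliqueB v hvB w hwB).mpr (Ne.symm hne)
        rw [hnb, card_insert_of_notMem (fun h => haB (mem_of_mem_erase h)),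
          card_erase_of_mem hvB, hBcard]
        omega
      · have hvmem : v ∈ B \ Nb := mem_sdiff.mpr ⟨hvB, hvNb⟩
        obtain ⟨u, hu, hfu⟩ := hbij.surjOn (by simpa using hvmem)
        have huA : u ∈ A \ Na := by simpa using hu
        have huA' : u ∈ A := (mem_sdiff.mp huA).1
        have hnb : G.neighborFinset v = insert u (B.erase v) := by
          ext w
          simp only [SimpleGraph.mem_neighborFinset, mem_insert, mem_erase]
          constructor
          · intro hadj
            rcases hcases w with rfl | hwA | hwB
            · rcases mem_union.mp (by simpa [hadja] using hadj.symm) with h | h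
              · exact absurd (hNaA h) (fun hA => hAB v hA hvB)
              · exact absurd h hvNb
            · have hw := (hmatch w hwA v hvB).mp hadj.symm
              have : w = u := hbij.injOn (by simpa using hw.1) hu (by rw [hw.2.2, hfu])
              exact Or.inl this
            · exact Or.inr ⟨((hcliqueB v hvB w hwB).mp hadj).symm, hwB⟩
          · rintro (rfl | ⟨hne, hwB⟩)
            · exact ((hmatch w huA' v hvB).mpr ⟨huA, hvmem, hfu⟩).symm
            · exact (hcliqueB v hvB w hwB).mpr (Ne.symm hne)
        rw [hnb, card_insert_of_notMem
            (fun h => hAB u huA' (mem_of_mem_erase h)),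
          card_erase_of_mem hvB, hBcard]
        omega
  · unfold crossCount
    have hset : ((insert a A ×ˢ B).filter fun p => G.Adj p.1 p.2) =
        ({a} ×ˢ Nb) ∪ (A \ Na).image (fun u => (u, f u)) := by
      ext ⟨u, v⟩
      simp only [mem_filter, mem_product, mem_insert, mem_union, mem_singleton,
        mem_image, Prod.mk.injEq]
      constructor
      · rintro ⟨⟨rfl | huA, hvB⟩, hadj⟩
        · left
          refine ⟨rfl, ?_⟩
          rcases mem_union.mp ((hadja v).mp hadj) with h | h
          · exact absurd (hNaA h) (fun hA => hAB v hA hvB)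
          · exact h
        · right
          have := (hmatch u huA v hvB).mp hadj
          exact ⟨u, this.1, rfl, this.2.2⟩
      · rintro (⟨rfl, hvNb⟩ | ⟨w, hw, rfl, rfl⟩)
        · exact ⟨⟨Or.inl rfl, hNbB hvNb⟩, (hadja v).mpr (mem_union_right _ hvNb)⟩
        · have hwA := (mem_sdiff.mp hw).1
          have hfw : f w ∈ B \ Nb := by
            have := hbij.mapsTo (by simpa using hw); simpa using this
          exact ⟨⟨Or.inr hwA, (mem_sdiff.mp hfw).1⟩,
            (hmatch w hwA (f w) (mem_sdiff.mp hfw).1).mpr ⟨hw, hfw, rfl⟩⟩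
    rw [hset, card_union_of_disjoint, card_product, card_singleton, one_mul, hNbcard,
      card_image_of_injOn (fun x _ y _ h => (Prod.mk.injEq ..).mp h |>.1)]
    · rw [card_sdiff_of_subset hNaA, hAcard, hNacard]; omega
    · rw [Finset.disjoint_left]
      rintro ⟨u, v⟩ hp hq
      simp only [mem_product, mem_singleton] at hp
      simp only [mem_image, Prod.mk.injEq] at hq
      obtain ⟨w, hw, rfl, rfl⟩ := hq
      exact haA (hp.1 ▸ (mem_sdiff.mp hw).1)
end
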